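/- arXiv:2410.17045 — 5 statements merged into one kernel-verified Lean document; each statement's English description precedes it below -/
import Mathlib

section
/- Applicative similarity ≲app for extended combinatory logic (xCL) is a congruence: ≲app(S,S), ≲app(K,K), ≲app(I,I); if ≲app(p,q) then ≲app(S'(p),S'(q)) and ≲app(K'(p),K'(q)); and if ≲app(p,q) and ≲app(p',q') then ≲app(S''(p,p'),S''(q,q')) and ≲app(app(p,p'),app(q,q')). -/
namespace XCL

/-- Terms of extended combinatory logic (xCL). -/
inductive Tm : Type
  | S : Tm
  | K : Tm
  | I : Tm
  | S1 (t : Tm) : Tm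
  | K1 (t : Tm) : Tm
  | S2 (t s : Tm) : Tm
  | app (t s : Tm) : Tm

/-- Labeled transitions `p —t→ p'` (`LStep p t p'`). -/
inductive LStep : Tm → Tm → Tm → Prop
  | S (t : Tm) : LStep .S t (.S1 t)
  | S1 (p t : Tm) : LStep (.S1 p) t (.S2 p t)
  | S2 (p q t : Tm) : LStep (.S2 p q) t (.app (.app p t) (.app q t))
  | K (t : Tm) : LStep .K t (.K1 t)
  | K1 (p t : Tm) : LStep (.K1 p) t p
  | I (t : Tm) : LStep .I t t

/-- Unlabeled transitions `p → p'`. -/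
inductive Step : Tm → Tm → Prop
  | appL {p p' : Tm} (q : Tm) : Step p p' → Step (.app p q) (.app p' q)
  | beta {p q p' : Tm} : LStep p q p' → Step (.app p q) p'

/-- `p ⇒ p'`: reflexive-transitive closure of `→`. -/
def Steps : Tm → Tm → Prop := Relation.ReflTransGen Step

/-- `p ⇒^t p'`: weak labeled transition. -/
def WLStep (p t p' : Tm) : Prop := ∃ p'', Steps p p'' ∧ LStep p'' t p'

/-- `p` terminates: it admits no unlabeled transition. -/
def Terminates (p : Tm) : Prop := ∀ p', ¬ Step p p'

/-- `p ⇓ p'`. -/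
def BigStep (p p' : Tm) : Prop := Steps p p' ∧ Terminates p'

/-- `p⇓`: `p` eventually terminates. -/
def Conv (p : Tm) : Prop := ∃ p', BigStep p p'

/-- Applicative simulations. -/
def IsAppSim (R : Tm → Tm → Prop) : Prop :=
  ∀ p q, R p q →
    (∀ p', Step p p' → ∃ q', Steps q q' ∧ R p' q') ∧
    (∀ t p', LStep p t p' → ∃ q', WLStep q t q' ∧ R p' q')

/-- Applicative similarity `≲app`: the union of all applicative simulations. -/
def AppSim (p q : Tm) : Prop := ∃ R, IsAppSim R ∧ R p q

/-- One-hole contexts `C[·]`. -/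
inductive Ctx : Type
  | hole : Ctx
  | S1 (c : Ctx) : Ctx
  | K1 (c : Ctx) : Ctx
  | S2L (c : Ctx) (s : Tm) : Ctx
  | S2R (t : Tm) (c : Ctx) : Ctx
  | appL (c : Ctx) (s : Tm) : Ctx
  | appR (t : Tm) (c : Ctx) : Ctx

/-- `C[p]`: plugging a term into the hole of a context. -/
def plug : Ctx → Tm → Tm
  | .hole, p => p
  | .S1 c, p => .S1 (plug c p)
  | .K1 c, p => .K1 (plug c p)
  | .S2L c s, p => .S2 (plug c p) s
  | .S2R t c, p => .S2 t (plug c p)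
  | .appL c s, p => .app (plug c p) s
  | .appR t c, p => .app t (plug c p)

/-- The contextual preorder `≲ctx`. -/
def CtxLe (p q : Tm) : Prop := ∀ C : Ctx, Conv (plug C p) → Conv (plug C q)

/-- Congruences: relations compatible with all xCL operators. -/
def IsCong (R : Tm → Tm → Prop) : Prop :=
  R .S .S ∧ R .K .K ∧ R .I .I ∧
  (∀ p q, R p q → R (.S1 p) (.S1 q)) ∧
  (∀ p q, R p q → R (.K1 p) (.K1 q)) ∧
  (∀ p q p' q', R p q → R p' q' → R (.S2 p p') (.S2 q q')) ∧
  (∀ p q p' q', R p q → R p' q' → R (.app p p') (.app q q'))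

/-- Adequacy for termination. -/
def Adequate (R : Tm → Tm → Prop) : Prop := ∀ p q, R p q → Conv p → Conv q

/-- The step-indexed approximations `Lⁿ`. -/
def LrelN : ℕ → Tm → Tm → Prop
  | 0, _, _ => True
  | n+1, p, q => LrelN n p q ∧
      (∀ p', Step p p' → ∃ q', Steps q q' ∧ LrelN n p' q') ∧
      (Terminates p → ∃ qb, BigStep q qb ∧
        ∀ d e p' q', LrelN n d e → LStep p d p' → LStep qb e q' → LrelN n p' q')

/-- The step-indexed logical relation `L = ⋂ₙ Lⁿ`. -/
def LRel (p q : Tm) : Prop := ∀ n, LrelN n p q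

/-! ### Auxiliary development: Howe's method -/

theorem appSim_refl (p : Tm) : AppSim p p := by
  refine ⟨Eq, ?_, rfl⟩
  rintro a b rfl
  exact ⟨fun p' h => ⟨p', Relation.ReflTransGen.single h, rfl⟩,
         fun t p' h => ⟨p', ⟨a, Relation.ReflTransGen.refl, h⟩, rfl⟩⟩

theorem isAppSim_steps {R : Tm → Tm → Prop} (hR : IsAppSim R) {p p' : Tm}
    (hs : Steps p p') : ∀ q, R p q → ∃ q', Steps q q' ∧ R p' q' := by
  induction hs using Relation.ReflTransGen.head_induction_on with
  | refl => exact fun q h => ⟨q, Relation.ReflTransGen.refl, h⟩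
  | head hstep _ ih =>
      intro q h
      obtain ⟨q1, hq1, hr1⟩ := (hR _ _ h).1 _ hstep
      obtain ⟨q', hq', hr'⟩ := ih q1 hr1
      exact ⟨q', Relation.ReflTransGen.trans hq1 hq', hr'⟩

theorem appSim_isAppSim : IsAppSim AppSim := by
  rintro p q ⟨R, hR, hpq⟩
  constructor
  · intro p' h
    obtain ⟨q', hs, hr⟩ := (hR _ _ hpq).1 _ h
    exact ⟨q', hs, R, hR, hr⟩
  · intro t p' h
    obtain ⟨q', hs, hr⟩ := (hR _ _ hpq).2 _ _ h
    exact ⟨q', hs, R, hR, hr⟩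

theorem appSim_steps {p p' q : Tm} (h : AppSim p q) (hs : Steps p p') :
    ∃ q', Steps q q' ∧ AppSim p' q' :=
  isAppSim_steps appSim_isAppSim hs q h

theorem appSim_trans {p q r : Tm} (h1 : AppSim p q) (h2 : AppSim q r) : AppSim p r := by
  refine ⟨fun a c => ∃ b, AppSim a b ∧ AppSim b c, ?_, q, h1, h2⟩
  rintro a c ⟨b, hab, hbc⟩
  constructor
  · intro a' ha
    obtain ⟨b', hb, hab'⟩ := (appSim_isAppSim _ _ hab).1 _ ha
    obtain ⟨c', hc, hbc'⟩ := appSim_steps hbc hb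
    exact ⟨c', hc, b', hab', hbc'⟩
  · intro t a' ha
    obtain ⟨b', ⟨b'', hb1, hb2⟩, hab'⟩ := (appSim_isAppSim _ _ hab).2 _ _ ha
    obtain ⟨c'', hc1, hbc''⟩ := appSim_steps hbc hb1
    obtain ⟨c', ⟨c3, hc2, hc3⟩, hbc'⟩ := (appSim_isAppSim _ _ hbc'').2 _ _ hb2
    exact ⟨c', ⟨c3, Relation.ReflTransGen.trans hc1 hc2, hc3⟩, b', hab', hbc'⟩

/-- The Howe closure of applicative similarity. -/
inductive Howe : Tm → Tm → Prop
  | S {q} : AppSim .S q → Howe .S q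
  | K {q} : AppSim .K q → Howe .K q
  | I {q} : AppSim .I q → Howe .I q
  | S1 {p p₁ q} : Howe p p₁ → AppSim (.S1 p₁) q → Howe (.S1 p) q
  | K1 {p p₁ q} : Howe p p₁ → AppSim (.K1 p₁) q → Howe (.K1 p) q
  | S2 {a a₁ b b₁ q} : Howe a a₁ → Howe b b₁ → AppSim (.S2 a₁ b₁) q → Howe (.S2 a b) q
  | app {a a₁ b b₁ q} : Howe a a₁ → Howe b b₁ → AppSim (.app a₁ b₁) q → Howe (.app a b) q

theorem Howe.right {p q r : Tm} (h : Howe p q) (h2 : AppSim q r) : Howe p r := by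
  cases h with
  | S h1 => exact .S (appSim_trans h1 h2)
  | K h1 => exact .K (appSim_trans h1 h2)
  | I h1 => exact .I (appSim_trans h1 h2)
  | S1 hp h1 => exact .S1 hp (appSim_trans h1 h2)
  | K1 hp h1 => exact .K1 hp (appSim_trans h1 h2)
  | S2 ha hb h1 => exact .S2 ha hb (appSim_trans h1 h2)
  | app ha hb h1 => exact .app ha hb (appSim_trans h1 h2)

theorem Howe.refl (p : Tm) : Howe p p := by
  induction p with
  | S => exact .S (appSim_refl _)
  | K => exact .K (appSim_refl _)
  | I => exact .I (appSim_refl _)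
  | S1 p ih => exact .S1 ih (appSim_refl _)
  | K1 p ih => exact .K1 ih (appSim_refl _)
  | S2 a b iha ihb => exact .S2 iha ihb (appSim_refl _)
  | app a b iha ihb => exact .app iha ihb (appSim_refl _)

theorem appSim_howe {p q : Tm} (h : AppSim p q) : Howe p q :=
  (Howe.refl p).right h

theorem steps_appL {p p' : Tm} (q : Tm) (h : Steps p p') :
    Steps (.app p q) (.app p' q) := by
  induction h with
  | refl => exact Relation.ReflTransGen.refl
  | tail _ hstep ih => exact Relation.ReflTransGen.tail ih (Step.appL q hstep)

/-- Key lemma of Howe's method: the Howe closure is a simulation, where in the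
labeled clause the labels themselves may vary along the Howe closure. -/
theorem Howe.key {p q : Tm} (h : Howe p q) :
    (∀ p', Step p p' → ∃ q', Steps q q' ∧ Howe p' q') ∧
    (∀ t s p', Howe t s → LStep p t p' → ∃ q', WLStep q s q' ∧ Howe p' q') := by
  induction h with
  | S hq =>
      refine ⟨(fun p' h => nomatch h), ?_⟩
      intro t s p' hts hl
      cases hl
      obtain ⟨q', hw, hsim⟩ := (appSim_isAppSim _ _ hq).2 s _ (LStep.S s)
      exact ⟨q', hw, .S1 hts hsim⟩
  | K hq =>
      refine ⟨(fun p' h => nomatch h), ?_⟩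
      intro t s p' hts hl
      cases hl
      obtain ⟨q', hw, hsim⟩ := (appSim_isAppSim _ _ hq).2 s _ (LStep.K s)
      exact ⟨q', hw, .K1 hts hsim⟩
  | I hq =>
      refine ⟨(fun p' h => nomatch h), ?_⟩
      intro t s p' hts hl
      cases hl
      obtain ⟨q', hw, hsim⟩ := (appSim_isAppSim _ _ hq).2 s _ (LStep.I s)
      exact ⟨q', hw, hts.right hsim⟩
  | S1 hp hq ih =>
      refine ⟨(fun p' h => nomatch h), ?_⟩
      intro t s p' hts hl
      cases hl
      obtain ⟨q', hw, hsim⟩ := (appSim_isAppSim _ _ hq).2 s _ (LStep.S1 _ s)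
      exact ⟨q', hw, .S2 hp hts hsim⟩
  | K1 hp hq ih =>
      refine ⟨(fun p' h => nomatch h), ?_⟩
      intro t s p' hts hl
      cases hl
      obtain ⟨q', hw, hsim⟩ := (appSim_isAppSim _ _ hq).2 s _ (LStep.K1 _ s)
      exact ⟨q', hw, hp.right hsim⟩
  | S2 ha hb hq iha ihb =>
      refine ⟨(fun p' h => nomatch h), ?_⟩
      intro t s p' hts hl
      cases hl
      obtain ⟨q', hw, hsim⟩ := (appSim_isAppSim _ _ hq).2 s _ (LStep.S2 _ _ s)
      exact ⟨q', hw, .app (.app ha hts (appSim_refl _)) (.app hb hts (appSim_refl _)) hsim⟩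
  | app ha hb hq iha ihb =>
      refine ⟨?_, (fun t s p' hts hl => nomatch hl)⟩
      intro p' hst
      cases hst with
      | appL _ hstep =>
          obtain ⟨a₂, ha₂, hH⟩ := iha.1 _ hstep
          obtain ⟨q', hq', hsim'⟩ := appSim_steps hq (steps_appL _ ha₂)
          exact ⟨q', hq', .app hH hb hsim'⟩
      | beta hl =>
          obtain ⟨a₂, ⟨a₃, hsteps, hlstep⟩, hH⟩ := iha.2 _ _ _ hb hl
          have hs : Steps (.app _ _) a₂ :=
            Relation.ReflTransGen.tail (steps_appL _ hsteps) (Step.beta hlstep)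
          obtain ⟨q', hq', hsim'⟩ := appSim_steps hq hs
          exact ⟨q', hq', hH.right hsim'⟩

theorem howe_isAppSim : IsAppSim Howe := by
  intro p q h
  obtain ⟨h1, h2⟩ := h.key
  exact ⟨h1, fun t p' hl => h2 t t p' (Howe.refl t) hl⟩

theorem howe_appSim {p q : Tm} (h : Howe p q) : AppSim p q :=
  ⟨Howe, howe_isAppSim, h⟩

end XCL

open XCL in
/-- Applicative similarity for xCL is a congruence. -/
theorem appSim_isCong :
    AppSim .S .S ∧ AppSim .K .K ∧ AppSim .I .I ∧
    (∀ p q, AppSim p q → AppSim (.S1 p) (.S1 q)) ∧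
    (∀ p q, AppSim p q → AppSim (.K1 p) (.K1 q)) ∧
    (∀ p q p' q', AppSim p q → AppSim p' q' → AppSim (.S2 p p') (.S2 q q')) ∧
    (∀ p q p' q', AppSim p q → AppSim p' q' → AppSim (.app p p') (.app q q')) := by
  refine ⟨appSim_refl _, appSim_refl _, appSim_refl _, ?_, ?_, ?_, ?_⟩
  · intro p q h
    exact howe_appSim (.S1 (appSim_howe h) (appSim_refl _))
  · intro p q h
    exact howe_appSim (.K1 (appSim_howe h) (appSim_refl _))
  · intro p q p' q' h h'
    exact howe_appSim (.S2 (appSim_howe h) (appSim_howe h') (appSim_refl _))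
  · intro p q p' q' h h'
    exact howe_appSim (.app (appSim_howe h) (appSim_howe h') (appSim_refl _))
end

section
/- Applicative similarity ≲app for extended combinatory logic (xCL) is adequate for termination: if p ≲app q and p⇓, then q⇓. -/
open XCL in
theorem lstep_of_terminates : ∀ p : Tm, Terminates p → ∀ t, ∃ p', LStep p t p' := by
  intro p
  induction p with
  | S => exact fun _ t => ⟨_, .S t⟩
  | K => exact fun _ t => ⟨_, .K t⟩
  | I => exact fun _ t => ⟨_, .I t⟩
  | S1 p _ => exact fun _ t => ⟨_, .S1 p t⟩
  | K1 p _ => exact fun _ t => ⟨_, .K1 p t⟩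
  | S2 p q _ _ => exact fun _ t => ⟨_, .S2 p q t⟩
  | app p q ih _ =>
      intro hterm t
      exfalso
      have hp : Terminates p := fun p' hs => hterm _ (Step.appL q hs)
      obtain ⟨p', hp'⟩ := ih hp q
      exact hterm p' (Step.beta hp')

open XCL in
theorem terminates_of_lstep {p t p' : Tm} (h : LStep p t p') : Terminates p := by
  cases h <;> · intro x hx; cases hx

open XCL in
theorem sim_steps {R : Tm → Tm → Prop} (hR : IsAppSim R) :
    ∀ {p p'}, Steps p p' → ∀ {q}, R p q → ∃ q', Steps q q' ∧ R p' q' := by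
  intro p p' h
  induction h with
  | refl => exact fun hr => ⟨_, Relation.ReflTransGen.refl, hr⟩
  | tail _ hs ih =>
      intro q hr
      obtain ⟨q1, hq1, hr1⟩ := ih hr
      obtain ⟨q2, hq2, hr2⟩ := (hR _ _ hr1).1 _ hs
      exact ⟨q2, hq1.trans hq2, hr2⟩

open XCL in
/-- Applicative similarity for xCL is adequate for termination. -/
theorem appSim_adequate : ∀ p q : Tm, AppSim p q → Conv p → Conv q := by
  intro p q ⟨R, hR, hpq⟩ ⟨p0, hsteps, hterm⟩
  obtain ⟨q0, hq0, hr0⟩ := sim_steps hR hsteps hpq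
  obtain ⟨p1, hp1⟩ := lstep_of_terminates p0 hterm Tm.I
  obtain ⟨q1, ⟨q2, hq2, hl⟩, _⟩ := (hR _ _ hr0).2 _ _ hp1
  exact ⟨q2, hq0.trans hq2, terminates_of_lstep hl⟩
end

section
/- The step-indexed logical relation L for extended combinatory logic (xCL) is a congruence: L(S,S), L(K,K), L(I,I); if L(p,q) then L(S'(p),S'(q)) and L(K'(p),K'(q)); and if L(p,q) and L(p',q') then L(S''(p,p'),S''(q,q')) and L(app(p,p'),app(q,q')). -/
namespace XCL

theorem app_has_step (p q : Tm) : ∃ r, Step (.app p q) r := by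
  induction p generalizing q with
  | S => exact ⟨_, .beta (.S q)⟩
  | K => exact ⟨_, .beta (.K q)⟩
  | I => exact ⟨_, .beta (.I q)⟩
  | S1 t _ => exact ⟨_, .beta (.S1 t q)⟩
  | K1 t _ => exact ⟨_, .beta (.K1 t q)⟩
  | S2 t s _ _ => exact ⟨_, .beta (.S2 t s q)⟩
  | app t s ih _ => obtain ⟨r, hr⟩ := ih s; exact ⟨_, .appL q hr⟩

theorem app_not_terminates (p q : Tm) : ¬ Terminates (.app p q) := by
  obtain ⟨r, hr⟩ := app_has_step p q
  exact fun h => h r hr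

theorem terminal_lstep {t : Tm} (h : Terminates t) (s : Tm) : ∃ t', LStep t s t' := by
  cases t with
  | S => exact ⟨_, .S s⟩
  | K => exact ⟨_, .K s⟩
  | I => exact ⟨_, .I s⟩
  | S1 p => exact ⟨_, .S1 p s⟩
  | K1 p => exact ⟨_, .K1 p s⟩
  | S2 p q => exact ⟨_, .S2 p q s⟩
  | app p q => exact absurd h (app_not_terminates p q)

theorem lstep_terminates {p t p' : Tm} (h : LStep p t p') : Terminates p := by
  cases h <;> exact fun _ h => nomatch h

theorem lrelN_succ {n : ℕ} {p q : Tm} : LrelN (n+1) p q ↔ (LrelN n p q ∧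
    (∀ p', Step p p' → ∃ q', Steps q q' ∧ LrelN n p' q') ∧
    (Terminates p → ∃ qb, BigStep q qb ∧
      ∀ d e p' q', LrelN n d e → LStep p d p' → LStep qb e q' → LrelN n p' q')) :=
  Iff.rfl

theorem term_S : Terminates Tm.S := fun _ h => nomatch h
theorem term_K : Terminates Tm.K := fun _ h => nomatch h
theorem term_I : Terminates Tm.I := fun _ h => nomatch h
theorem term_S1 (p : Tm) : Terminates (Tm.S1 p) := fun _ h => nomatch h
theorem term_K1 (p : Tm) : Terminates (Tm.K1 p) := fun _ h => nomatch h
theorem term_S2 (p q : Tm) : Terminates (Tm.S2 p q) := fun _ h => nomatch h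

def Good (n : ℕ) : Prop :=
  LrelN n .S .S ∧ LrelN n .K .K ∧ LrelN n .I .I ∧
  (∀ p q, LrelN n p q → LrelN n (.S1 p) (.S1 q)) ∧
  (∀ p q, LrelN n p q → LrelN n (.K1 p) (.K1 q)) ∧
  (∀ p q p' q', LrelN n p q → LrelN n p' q' → LrelN n (.S2 p p') (.S2 q q')) ∧
  (∀ p q p' q', LrelN n p q → LrelN n p' q' → LrelN n (.app p p') (.app q q'))

theorem good : ∀ n, Good n := by
  intro n
  induction n with
  | zero =>
    exact ⟨trivial, trivial, trivial, fun _ _ _ => trivial, fun _ _ _ => trivial,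
      fun _ _ _ _ _ _ => trivial, fun _ _ _ _ _ _ => trivial⟩
  | succ n ih =>
    obtain ⟨hS, hK, hI, hS1, hK1, hS2, hApp⟩ := ih
    refine ⟨?_, ?_, ?_, ?_, ?_, ?_, ?_⟩
    · refine lrelN_succ.mpr ⟨hS, fun p' h => absurd h (term_S p'),
        fun _ => ⟨.S, ⟨.refl, term_S⟩, ?_⟩⟩
      intro d e p' q' hde hp hq
      cases hp; cases hq; exact hS1 _ _ hde
    · refine lrelN_succ.mpr ⟨hK, fun p' h => absurd h (term_K p'),
        fun _ => ⟨.K, ⟨.refl, term_K⟩, ?_⟩⟩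
      intro d e p' q' hde hp hq
      cases hp; cases hq; exact hK1 _ _ hde
    · refine lrelN_succ.mpr ⟨hI, fun p' h => absurd h (term_I p'),
        fun _ => ⟨.I, ⟨.refl, term_I⟩, ?_⟩⟩
      intro d e p' q' hde hp hq
      cases hp; cases hq; exact hde
    · -- S1 compatibility
      intro p q h
      obtain ⟨h1, h2, h3⟩ := lrelN_succ.mp h
      refine lrelN_succ.mpr ⟨hS1 _ _ h1, fun r hst => absurd hst (term_S1 p r),
        fun _ => ⟨.S1 q, ⟨.refl, term_S1 q⟩, ?_⟩⟩
      intro d e p' q' hde hp hq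
      cases hp; cases hq; exact hS2 _ _ _ _ h1 hde
    · -- K1 compatibility
      intro p q h
      obtain ⟨h1, h2, h3⟩ := lrelN_succ.mp h
      refine lrelN_succ.mpr ⟨hK1 _ _ h1, fun r hst => absurd hst (term_K1 p r),
        fun _ => ⟨.K1 q, ⟨.refl, term_K1 q⟩, ?_⟩⟩
      intro d e p' q' hde hp hq
      cases hp; cases hq; exact h1
    · -- S2 compatibility
      intro p q p' q' h h'
      obtain ⟨h1, _, _⟩ := lrelN_succ.mp h
      obtain ⟨h1', _, _⟩ := lrelN_succ.mp h'
      refine lrelN_succ.mpr ⟨hS2 _ _ _ _ h1 h1', fun r hst => absurd hst (term_S2 p p' r),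
        fun _ => ⟨.S2 q q', ⟨.refl, term_S2 q q'⟩, ?_⟩⟩
      intro d e r sr hde hp hq
      cases hp; cases hq
      exact hApp _ _ _ _ (hApp _ _ _ _ h1 hde) (hApp _ _ _ _ h1' hde)
    · -- app compatibility
      intro p q p' q' h h'
      obtain ⟨h1, h2, h3⟩ := lrelN_succ.mp h
      obtain ⟨h1', _, _⟩ := lrelN_succ.mp h'
      refine lrelN_succ.mpr ⟨hApp _ _ _ _ h1 h1', ?_,
        fun ht => absurd ht (app_not_terminates p p')⟩
      intro r hst
      cases hst with
      | appL _ hstep =>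
        obtain ⟨q₂, hsteps, hrel⟩ := h2 _ hstep
        exact ⟨.app q₂ q', steps_appL q' hsteps, hApp _ _ _ _ hrel h1'⟩
      | beta hls =>
        obtain ⟨qb, ⟨hqsteps, hqterm⟩, hclause⟩ := h3 (lstep_terminates hls)
        obtain ⟨q₂, hlq⟩ := terminal_lstep hqterm q'
        exact ⟨q₂, (steps_appL q' hqsteps).tail (.beta hlq),
          hclause _ _ _ _ h1' hls hlq⟩

end XCL

open XCL in
/-- The step-indexed logical relation for xCL is a congruence. -/
theorem logRel_isCong :
    LRel .S .S ∧ LRel .K .K ∧ LRel .I .I ∧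
    (∀ p q, LRel p q → LRel (.S1 p) (.S1 q)) ∧
    (∀ p q, LRel p q → LRel (.K1 p) (.K1 q)) ∧
    (∀ p q p' q', LRel p q → LRel p' q' → LRel (.S2 p p') (.S2 q q')) ∧
    (∀ p q p' q', LRel p q → LRel p' q' → LRel (.app p p') (.app q q')) :=
  ⟨fun n => (good n).1, fun n => (good n).2.1, fun n => (good n).2.2.1,
    fun p q h n => (good n).2.2.2.1 p q (h n),
    fun p q h n => (good n).2.2.2.2.1 p q (h n),
    fun p q p' q' h h' n => (good n).2.2.2.2.2.1 p q p' q' (h n) (h' n),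
    fun p q p' q' h h' n => (good n).2.2.2.2.2.2 p q p' q' (h n) (h' n)⟩
end

section
/- The step-indexed logical relation L for extended combinatory logic (xCL) is adequate for termination: if L(p,q) and p⇓, then q⇓. -/
namespace XCL

/-- Length-indexed reduction sequences. -/
def StepsN : ℕ → Tm → Tm → Prop
  | 0, p, q => p = q
  | n+1, p, q => ∃ m, Step p m ∧ StepsN n m q

lemma steps_to_stepsN {p q : Tm} (h : Steps p q) : ∃ n, StepsN n p q := by
  induction h using Relation.ReflTransGen.head_induction_on with
  | refl => exact ⟨0, rfl⟩
  | head hs _ ih =>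
    obtain ⟨n, hn⟩ := ih
    exact ⟨n + 1, _, hs, hn⟩

lemma key : ∀ (k : ℕ) (p pb q : Tm), StepsN k p pb → Terminates pb →
    LrelN (k + 1) p q → Conv q := by
  intro k
  induction k with
  | zero =>
    intro p pb q hst hterm hL
    cases hst
    obtain ⟨qb, hqb, _⟩ := hL.2.2 hterm
    exact ⟨qb, hqb⟩
  | succ k ih =>
    intro p pb q hst hterm hL
    obtain ⟨m, hm, hrest⟩ := hst
    obtain ⟨q', hq', hL'⟩ := hL.2.1 m hm
    obtain ⟨qf, hqf1, hqf2⟩ := ih m pb q' hrest hterm hL'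
    exact ⟨qf, hq'.trans hqf1, hqf2⟩

end XCL

open XCL in
/-- The step-indexed logical relation for xCL is adequate for termination. -/
theorem logRel_adequate : ∀ p q : Tm, LRel p q → Conv p → Conv q := by
  intro p q hL ⟨pb, hst, hterm⟩
  obtain ⟨k, hk⟩ := steps_to_stepsN hst
  exact key k p pb q hk hterm (hL (k + 1))
end

section
/- The contextual preorder for extended combinatory logic (xCL) is the greatest adequate congruence: (a) ≲ctx is a congruence and is adequate for termination; (b) every relation R ⊆ Λ×Λ that is a congruence and adequate for termination is contained in ≲ctx. -/
namespace XCL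

def comp : Ctx → Ctx → Ctx
  | .hole, D => D
  | .S1 c, D => .S1 (comp c D)
  | .K1 c, D => .K1 (comp c D)
  | .S2L c s, D => .S2L (comp c D) s
  | .S2R t c, D => .S2R t (comp c D)
  | .appL c s, D => .appL (comp c D) s
  | .appR t c, D => .appR t (comp c D)

theorem plug_comp (C D : Ctx) (p : Tm) : plug (comp C D) p = plug C (plug D p) := by
  induction C <;> simp [comp, plug, *]

theorem ctxLe_refl (p : Tm) : CtxLe p p := fun _ h => h

theorem cong_refl (R : Tm → Tm → Prop) (h : IsCong R) (p : Tm) : R p p := by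
  obtain ⟨hS, hK, hI, h1, h2, h3, h4⟩ := h
  induction p with
  | S => exact hS
  | K => exact hK
  | I => exact hI
  | S1 t ih => exact h1 _ _ ih
  | K1 t ih => exact h2 _ _ ih
  | S2 t s iht ihs => exact h3 _ _ _ _ iht ihs
  | app t s iht ihs => exact h4 _ _ _ _ iht ihs

theorem cong_plug (R : Tm → Tm → Prop) (h : IsCong R) (C : Ctx) {p q : Tm}
    (hpq : R p q) : R (plug C p) (plug C q) := by
  obtain ⟨hS, hK, hI, h1, h2, h3, h4⟩ := h
  induction C with
  | hole => exact hpq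
  | S1 c ih => exact h1 _ _ ih
  | K1 c ih => exact h2 _ _ ih
  | S2L c s ih => exact h3 _ _ _ _ ih (cong_refl R ⟨hS, hK, hI, h1, h2, h3, h4⟩ s)
  | S2R t c ih => exact h3 _ _ _ _ (cong_refl R ⟨hS, hK, hI, h1, h2, h3, h4⟩ t) ih
  | appL c s ih => exact h4 _ _ _ _ ih (cong_refl R ⟨hS, hK, hI, h1, h2, h3, h4⟩ s)
  | appR t c ih => exact h4 _ _ _ _ (cong_refl R ⟨hS, hK, hI, h1, h2, h3, h4⟩ t) ih

end XCL

open XCL in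
/-- The contextual preorder for xCL is the greatest adequate congruence. -/
theorem ctxLe_greatest_adequate_congruence :
    (IsCong CtxLe ∧ Adequate CtxLe) ∧
    (∀ R : Tm → Tm → Prop, IsCong R → Adequate R → ∀ p q, R p q → CtxLe p q) := by
  constructor
  · constructor
    · refine ⟨ctxLe_refl _, ctxLe_refl _, ctxLe_refl _, ?_, ?_, ?_, ?_⟩
      · intro p q hpq C h
        have := hpq (comp C (.S1 .hole))
        simpa [plug_comp, plug] using this (by simpa [plug_comp, plug] using h)
      · intro p q hpq C h
        have := hpq (comp C (.K1 .hole))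
        simpa [plug_comp, plug] using this (by simpa [plug_comp, plug] using h)
      · intro p q p' q' hpq hpq' C h
        have h1 := hpq (comp C (.S2L .hole p'))
        have step1 : Conv (plug C (.S2 q p')) := by
          simpa [plug_comp, plug] using h1 (by simpa [plug_comp, plug] using h)
        have h2 := hpq' (comp C (.S2R q .hole))
        simpa [plug_comp, plug] using h2 (by simpa [plug_comp, plug] using step1)
      · intro p q p' q' hpq hpq' C h
        have h1 := hpq (comp C (.appL .hole p'))
        have step1 : Conv (plug C (.app q p')) := by
          simpa [plug_comp, plug] using h1 (by simpa [plug_comp, plug] using h)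
        have h2 := hpq' (comp C (.appR q .hole))
        simpa [plug_comp, plug] using h2 (by simpa [plug_comp, plug] using step1)
    · intro p q hpq h
      simpa [plug] using hpq .hole (by simpa [plug] using h)
  · intro R hcong hadeq p q hpq C h
    exact hadeq _ _ (cong_plug R hcong C hpq) h
end
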